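/- Let G ∈ ℝ^{2×2} be symmetric positive semidefinite with eigenpairs (θ₁, t₁), (θ₂, t₂), θ₁ ≥ θ₂ > 0 and t₁, t₂ orthonormal. Then the minimum over s ≥ 1 and orthonormal pairs (r₁, r₂) of the functional J(s, r₁, r₂) = s·r₁ᵀG r₁ + s⁻¹·r₂ᵀG r₂ is attained at s* = √(θ₁/θ₂), r₁* = t₂, r₂* = t₁, with minimum value 2√(θ₁θ₂). -/

import Mathlib

open Matrix

theorem aux_decomp (x y u v r0 r1 : ℝ) (h1 : x*x+y*y=1) (h2 : u*u+v*v=1) (h3 : x*u+y*v=0) :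
    r0 = (r0*x+r1*y)*x + (r0*u+r1*v)*u ∧ r1 = (r0*x+r1*y)*y + (r0*u+r1*v)*v := by
  obtain ⟨d, hd⟩ : ∃ d, d = x*v-y*u := ⟨_, rfl⟩
  have hd2 : d^2 = 1 := by
    have h : d^2 = (x*x+y*y)*(u*u+v*v) - (x*u+y*v)^2 := by rw [hd]; ring
    rw [h, h1, h2, h3]; ring
  have hu : u = -y*d := by
    have h : u*(x*x+y*y) = x*(x*u+y*v) - y*d := by rw [hd]; ring
    rw [h1, h3] at h; linarith
  have hv : v = x*d := by
    have h : v*(x*x+y*y) = y*(x*u+y*v) + x*d := by rw [hd]; ring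
    rw [h1, h3] at h; linarith
  constructor
  · rw [hu, hv]; linear_combination (-r0)*h1 + (r1*x*y - r0*y^2)*hd2
  · rw [hu, hv]; linear_combination (-r1)*h1 + (r0*x*y - r1*x^2)*hd2

theorem decomp (t₁ t₂ : Fin 2 → ℝ)
    (ht11 : t₁ ⬝ᵥ t₁ = 1) (ht22 : t₂ ⬝ᵥ t₂ = 1) (ht12 : t₁ ⬝ᵥ t₂ = 0)
    (r : Fin 2 → ℝ) : r = (r ⬝ᵥ t₁) • t₁ + (r ⬝ᵥ t₂) • t₂ := by
  simp only [dotProduct, Fin.sum_univ_two] at ht11 ht22 ht12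
  have h := aux_decomp (t₁ 0) (t₁ 1) (t₂ 0) (t₂ 1) (r 0) (r 1) ht11 ht22 ht12
  funext i
  fin_cases i <;>
    simp only [Pi.add_apply, Pi.smul_apply, smul_eq_mul, dotProduct, Fin.sum_univ_two]
  · exact h.1
  · exact h.2


theorem metric_functional_min (G : Matrix (Fin 2) (Fin 2) ℝ) (θ₁ θ₂ : ℝ)
    (t₁ t₂ : Fin 2 → ℝ)
    (hG : G.PosDef) (hθ : θ₁ ≥ θ₂) (hθ₂ : 0 < θ₂)
    (h1 : G.mulVec t₁ = θ₁ • t₁) (h2 : G.mulVec t₂ = θ₂ • t₂)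
    (ht11 : t₁ ⬝ᵥ t₁ = 1) (ht22 : t₂ ⬝ᵥ t₂ = 1) (ht12 : t₁ ⬝ᵥ t₂ = 0) :
    1 ≤ Real.sqrt (θ₁/θ₂) ∧
    Real.sqrt (θ₁/θ₂) * (t₂ ⬝ᵥ G.mulVec t₂)
      + (Real.sqrt (θ₁/θ₂))⁻¹ * (t₁ ⬝ᵥ G.mulVec t₁) = 2 * Real.sqrt (θ₁ * θ₂) ∧
    (∀ (s : ℝ) (r₁ r₂ : Fin 2 → ℝ), 1 ≤ s →
      r₁ ⬝ᵥ r₁ = 1 → r₂ ⬝ᵥ r₂ = 1 → r₁ ⬝ᵥ r₂ = 0 →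
      2 * Real.sqrt (θ₁ * θ₂) ≤ s * (r₁ ⬝ᵥ G.mulVec r₁) + s⁻¹ * (r₂ ⬝ᵥ G.mulVec r₂)) := by
  have hθ₁ : 0 < θ₁ := lt_of_lt_of_le hθ₂ hθ
  -- quadratic form formula
  have quad : ∀ r : Fin 2 → ℝ,
      r ⬝ᵥ G.mulVec r = θ₁ * (r ⬝ᵥ t₁)^2 + θ₂ * (r ⬝ᵥ t₂)^2 := by
    intro r
    conv_lhs => rw [show G.mulVec r = G.mulVec ((r ⬝ᵥ t₁) • t₁ + (r ⬝ᵥ t₂) • t₂) by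
      rw [← decomp t₁ t₂ ht11 ht22 ht12 r]]
    rw [mulVec_add, mulVec_smul, mulVec_smul, h1, h2]
    simp only [dotProduct_add, dotProduct_smul, smul_eq_mul, smul_smul]
    ring
  -- eigen quadratic forms
  have hG1 : t₁ ⬝ᵥ G.mulVec t₁ = θ₁ := by
    rw [h1, dotProduct_smul, smul_eq_mul, ht11, mul_one]
  have hG2 : t₂ ⬝ᵥ G.mulVec t₂ = θ₂ := by
    rw [h2, dotProduct_smul, smul_eq_mul, ht22, mul_one]
  have s₁ := Real.sqrt_pos.mpr hθ₁
  have s₂ := Real.sqrt_pos.mpr hθ₂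
  have sq₁ : Real.sqrt θ₁ ^ 2 = θ₁ := Real.sq_sqrt hθ₁.le
  have sq₂ : Real.sqrt θ₂ ^ 2 = θ₂ := Real.sq_sqrt hθ₂.le
  have hdiv : Real.sqrt (θ₁/θ₂) = Real.sqrt θ₁ / Real.sqrt θ₂ := Real.sqrt_div hθ₁.le θ₂
  have hmul : Real.sqrt (θ₁*θ₂) = Real.sqrt θ₁ * Real.sqrt θ₂ := Real.sqrt_mul hθ₁.le θ₂
  refine ⟨?_, ?_, ?_⟩
  · rw [hdiv]
    rw [le_div_iff₀ s₂, one_mul]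
    exact Real.sqrt_le_sqrt hθ
  · rw [hG1, hG2, hdiv, hmul]
    field_simp
    nlinarith [sq₁, sq₂, s₁, s₂]
  · intro s r₁ r₂ hs hr₁ hr₂ hr₁₂
    have hspos : 0 < s := lt_of_lt_of_le one_pos hs
    -- coefficients
    obtain ⟨a₁, ha₁⟩ : ∃ a, a = r₁ ⬝ᵥ t₁ := ⟨_, rfl⟩
    obtain ⟨b₁, hb₁⟩ : ∃ b, b = r₁ ⬝ᵥ t₂ := ⟨_, rfl⟩
    obtain ⟨a₂, ha₂⟩ : ∃ a, a = r₂ ⬝ᵥ t₁ := ⟨_, rfl⟩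
    obtain ⟨b₂, hb₂⟩ : ∃ b, b = r₂ ⬝ᵥ t₂ := ⟨_, rfl⟩
    have e₁ : a₁^2 + b₁^2 = 1 := by
      have := hr₁
      conv_lhs at this => rw [show r₁ ⬝ᵥ r₁ = r₁ ⬝ᵥ ((r₁ ⬝ᵥ t₁) • t₁ + (r₁ ⬝ᵥ t₂) • t₂) by
        rw [← decomp t₁ t₂ ht11 ht22 ht12 r₁]]
      simp only [dotProduct_add, dotProduct_smul, smul_eq_mul] at this
      rw [ha₁, hb₁]; linear_combination this
    have e₂ : a₂^2 + b₂^2 = 1 := by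
      have := hr₂
      conv_lhs at this => rw [show r₂ ⬝ᵥ r₂ = r₂ ⬝ᵥ ((r₂ ⬝ᵥ t₁) • t₁ + (r₂ ⬝ᵥ t₂) • t₂) by
        rw [← decomp t₁ t₂ ht11 ht22 ht12 r₂]]
      simp only [dotProduct_add, dotProduct_smul, smul_eq_mul] at this
      rw [ha₂, hb₂]; linear_combination this
    have e₁₂ : a₁*a₂ + b₁*b₂ = 0 := by
      have := hr₁₂
      conv_lhs at this => rw [show r₁ ⬝ᵥ r₂ = r₁ ⬝ᵥ ((r₂ ⬝ᵥ t₁) • t₁ + (r₂ ⬝ᵥ t₂) • t₂) by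
        rw [← decomp t₁ t₂ ht11 ht22 ht12 r₂]]
      simp only [dotProduct_add, dotProduct_smul, smul_eq_mul] at this
      rw [ha₁, hb₁, ha₂, hb₂]; linear_combination this
    have q₁ : r₁ ⬝ᵥ G.mulVec r₁ = θ₁*a₁^2 + θ₂*b₁^2 := by rw [quad, ha₁, hb₁]
    have q₂ : r₂ ⬝ᵥ G.mulVec r₂ = θ₁*a₂^2 + θ₂*b₂^2 := by rw [quad, ha₂, hb₂]
    have hD : (a₁*b₂ - a₂*b₁)^2 = 1 := by linear_combination (a₂^2+b₂^2)*e₁ + e₂ - (a₁*a₂+b₁*b₂)*e₁₂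
    have hq1pos : 0 ≤ θ₁*a₁^2 + θ₂*b₁^2 := by positivity
    have hq2pos : 0 ≤ θ₁*a₂^2 + θ₂*b₂^2 := by positivity
    have hqq : θ₁*θ₂ ≤ (θ₁*a₁^2 + θ₂*b₁^2) * (θ₁*a₂^2 + θ₂*b₂^2) := by
      nlinarith [hD, sq_nonneg (θ₁*a₁*a₂ + θ₂*b₁*b₂), mul_pos hθ₁ hθ₂]
    obtain ⟨Q₁, hQ₁⟩ : ∃ q, q = θ₁*a₁^2 + θ₂*b₁^2 := ⟨_, rfl⟩
    obtain ⟨Q₂, hQ₂⟩ : ∃ q, q = θ₁*a₂^2 + θ₂*b₂^2 := ⟨_, rfl⟩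
    rw [q₁, q₂, ← hQ₁, ← hQ₂]
    rw [← hQ₁] at hq1pos hqq
    rw [← hQ₂] at hq2pos hqq
    have key : 2 * Real.sqrt (Q₁*Q₂) ≤ s * Q₁ + s⁻¹ * Q₂ := by
      have h0 := sq_nonneg (Real.sqrt (s*Q₁) - Real.sqrt (s⁻¹*Q₂))
      have e : Real.sqrt (s*Q₁) * Real.sqrt (s⁻¹*Q₂) = Real.sqrt (Q₁*Q₂) := by
        rw [← Real.sqrt_mul (mul_nonneg hspos.le hq1pos)]
        congr 1
        field_simp
      rw [sub_sq, Real.sq_sqrt (mul_nonneg hspos.le hq1pos),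
        Real.sq_sqrt (mul_nonneg (inv_nonneg.mpr hspos.le) hq2pos), mul_assoc, e] at h0
      linarith
    calc 2 * Real.sqrt (θ₁ * θ₂) ≤ 2 * Real.sqrt (Q₁*Q₂) := by
          have := Real.sqrt_le_sqrt hqq; linarith
      _ ≤ s * Q₁ + s⁻¹ * Q₂ := key
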